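/- arXiv:2209.03931 — 2 statements merged into one kernel-verified Lean document; each statement's English description precedes it below -/
import Mathlib

section
/- If T₁ and T₂ are trees with γ_P(T₁) = γ(T₁) and γ_P(T₂) = γ(T₂), then γ_P(T₁ □ T₂) ≥ γ_P(T₁)·γ_P(T₂). -/
namespace PaperPD

open SimpleGraph

variable {V : Type} {W : Type}

/-- Observation process for power domination on a simple graph. -/
inductive Observed (G : SimpleGraph V) (S : Set V) : V → Prop
  | mem : ∀ v ∈ S, Observed G S v
  | dom : ∀ u v, u ∈ S → G.Adj u v → Observed G S v
  | prop : ∀ u v, Observed G S u → G.Adj u v →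
      (∀ w, G.Adj u w → w ≠ v → Observed G S w) → Observed G S v

/-- `S` is a power dominating set of `G`. -/
def IsPDS (G : SimpleGraph V) (S : Set V) : Prop := ∀ v, Observed G S v

/-- Power domination number. -/
noncomputable def pdNum (G : SimpleGraph V) [Fintype V] : ℕ :=
  sInf {n | ∃ S : Finset V, S.card = n ∧ IsPDS G ↑S}

/-- Zero forcing process. -/
inductive Forced (G : SimpleGraph V) (S : Set V) : V → Prop
  | mem : ∀ v ∈ S, Forced G S v
  | prop : ∀ u v, Forced G S u → G.Adj u v →
      (∀ w, G.Adj u w → w ≠ v → Forced G S w) → Forced G S v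

/-- Zero forcing number. -/
noncomputable def zNum (G : SimpleGraph V) [Fintype V] : ℕ :=
  sInf {n | ∃ S : Finset V, S.card = n ∧ ∀ v, Forced G S v}

/-- Domination number. -/
noncomputable def domNum (G : SimpleGraph V) [Fintype V] : ℕ :=
  sInf {n | ∃ S : Finset V, S.card = n ∧ ∀ v, ∃ u ∈ S, v = u ∨ G.Adj u v}

/-- No induced `K_{1,3}`. -/
def ClawFree (G : SimpleGraph V) : Prop :=
  ∀ x a b c : V, a ≠ b → a ≠ c → b ≠ c →
    G.Adj x a → G.Adj x b → G.Adj x c →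
    ¬ G.Adj a b → ¬ G.Adj a c → ¬ G.Adj b c → False

/-- No induced `K₄` minus an edge. -/
def DiamondFree (G : SimpleGraph V) : Prop :=
  ∀ a b c d : V, a ≠ b → a ≠ c → a ≠ d → b ≠ c → b ≠ d → c ≠ d →
    G.Adj a b → G.Adj a c → G.Adj b c → G.Adj b d → G.Adj c d →
    ¬ G.Adj a d → False

/-- A leaf: a vertex with exactly one neighbor. -/
def IsLeaf (G : SimpleGraph V) (v : V) : Prop := ∃! u, G.Adj v u

/-- A strong support vertex: adjacent to at least two leaves. -/
def IsStrongSupport (G : SimpleGraph V) (x : V) : Prop :=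
  ∃ a b, a ≠ b ∧ G.Adj x a ∧ G.Adj x b ∧ IsLeaf G a ∧ IsLeaf G b

/-- Number of strong support vertices. -/
noncomputable def ssCount (G : SimpleGraph V) : ℕ :=
  Nat.card {v // IsStrongSupport G v}

/-- Connected with no bridges. -/
def TwoEdgeConnected (G : SimpleGraph V) : Prop :=
  G.Connected ∧ ∀ e, ¬ G.IsBridge e

/-- A loopless multigraph, given by symmetric edge multiplicities. -/
structure Multigraph (W : Type) where
  mult : W → W → ℕ
  symm : ∀ u v, mult u v = mult v u
  loopless : ∀ v, mult v v = 0

/-- Underlying simple graph of a multigraph. -/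
def Multigraph.toSimple (M : Multigraph W) : SimpleGraph W where
  Adj u v := u ≠ v ∧ 0 < M.mult u v
  symm := ⟨by intro u v h; exact ⟨h.1.symm, by rw [M.symm]; exact h.2⟩⟩
  loopless := ⟨by intro v h; exact h.1 rfl⟩

/-- Degree of a vertex in a multigraph (counting multiplicities). -/
def Multigraph.degree [Fintype W] (M : Multigraph W) (v : W) : ℕ :=
  ∑ u, M.mult v u

/-- Bridgeless multigraph: no single edge is a cut edge (a parallel edge
is never a bridge). -/
def Multigraph.Bridgeless (M : Multigraph W) : Prop :=
  ∀ u v, M.mult u v = 1 → ¬ M.toSimple.IsBridge s(u, v)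

/-- A 2-factor of a multigraph, given by sub-multiplicities. -/
def Multigraph.IsTwoFactor [Fintype W] (M : Multigraph W) (f : W → W → ℕ) : Prop :=
  (∀ u v, f u v ≤ M.mult u v) ∧ (∀ u v, f u v = f v u) ∧ (∀ v, ∑ u, f v u = 2)

/-- Observation process for power domination on a multigraph: propagation
only happens along single edges. -/
inductive MObserved (M : Multigraph W) (S : Set W) : W → Prop
  | mem : ∀ v ∈ S, MObserved M S v
  | dom : ∀ u v, u ∈ S → 0 < M.mult u v → MObserved M S v
  | prop : ∀ u v, MObserved M S u → M.mult u v = 1 →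
      (∀ w, 0 < M.mult u w → w ≠ v → MObserved M S w) → MObserved M S v

/-- Power domination number of a multigraph. -/
noncomputable def mpdNum (M : Multigraph W) [Fintype W] : ℕ :=
  sInf {n | ∃ S : Finset W, S.card = n ∧ ∀ v, MObserved M ↑S v}

/-!
In `T₁ □ T₂` every pair of strong support vertices `x ∈ T₁`, `y ∈ T₂` carries a fort: the
product of the leaves hanging at `x` with those hanging at `y`. A power dominating set must
meet the closed neighbourhood of every fort, and these closed neighbourhoods are pairwise
disjoint, so `γ_P(T₁ □ T₂)` is at least the product of the numbers of strong support vertices.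
On the other hand, in a tree with `γ_P = γ` the strong support vertices dominate: otherwise a
minimum dominating set contains a vertex that is not a strong support vertex, and dropping it
still leaves a power dominating set. Trees with at most two vertices have `γ_P = 1` and are
handled by projecting `T₁ □ T₂` onto the other factor.
-/

def Dominates (G : SimpleGraph V) (u v : V) : Prop :=
  v = u ∨ G.Adj u v

def IsDominating (G : SimpleGraph V) (S : Finset V) : Prop :=
  ∀ v, ∃ u ∈ S, Dominates G u v

lemma Observed.of_dominates {G : SimpleGraph V} {S : Set V} {u v : V} (hu : u ∈ S)
    (h : Dominates G u v) : Observed G S v := by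
  rcases h with rfl | huv
  · exact Observed.mem _ hu
  · exact Observed.dom u v hu huv

section Numbers

variable [Fintype V] {G : SimpleGraph V}

lemma pdNum_le_card {S : Finset V} (h : IsPDS G ↑S) : pdNum G ≤ S.card :=
  Nat.sInf_le ⟨S, rfl, h⟩

lemma exists_isPDS_card_eq_pdNum (G : SimpleGraph V) :
    ∃ S : Finset V, S.card = pdNum G ∧ IsPDS G ↑S :=
  Nat.sInf_mem (s := {n | ∃ S : Finset V, S.card = n ∧ IsPDS G ↑S})
    ⟨_, Finset.univ, rfl, fun v => Observed.mem v (by simp)⟩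

lemma domNum_le_card {S : Finset V} (h : IsDominating G S) : domNum G ≤ S.card :=
  Nat.sInf_le ⟨S, rfl, h⟩

lemma exists_isDominating_card_eq_domNum (G : SimpleGraph V) :
    ∃ S : Finset V, S.card = domNum G ∧ IsDominating G S :=
  Nat.sInf_mem (s := {n | ∃ S : Finset V, S.card = n ∧ IsDominating G S})
    ⟨_, Finset.univ, rfl, fun v => ⟨v, Finset.mem_univ v, Or.inl rfl⟩⟩

lemma ssCount_eq_card_filter [DecidablePred (IsStrongSupport G)] :
    ssCount G = (Finset.univ.filter (IsStrongSupport G)).card := by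
  simp [ssCount, Nat.card_eq_fintype_card, Fintype.card_subtype]

end Numbers

section Leaves

variable {G : SimpleGraph V}

lemma IsLeaf.eq_of_adj {v u w : V} (h : IsLeaf G v) (hu : G.Adj v u) (hw : G.Adj v w) :
    u = w :=
  h.unique hu hw

lemma isLeaf_of_forall_adj {v u : V} (hu : G.Adj v u) (h : ∀ w, G.Adj v w → w = u) :
    IsLeaf G v :=
  ⟨u, hu, h⟩

lemma exists_adj_ne_of_not_isLeaf {v u : V} (hvu : G.Adj v u) (hv : ¬ IsLeaf G v) :
    ∃ w, G.Adj v w ∧ w ≠ u := by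
  by_contra! h
  exact hv (isLeaf_of_forall_adj hvu h)

lemma IsStrongSupport.not_isLeaf {x : V} (h : IsStrongSupport G x) : ¬ IsLeaf G x := by
  obtain ⟨a, b, hab, hxa, hxb, -, -⟩ := h
  exact fun hx => hab (hx.eq_of_adj hxa hxb)

lemma card_le_two_of_adj_of_isLeaf [Fintype V] (hG : G.Connected) {u v : V}
    (huv : G.Adj u v) (hu : IsLeaf G u) (hv : IsLeaf G v) : Fintype.card V ≤ 2 := by
  classical
  have huniv : ∀ z, z = u ∨ z = v := by
    intro z
    by_contra hz
    obtain ⟨e, -, he₁, he₂⟩ :=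
      (hG.preconnected u z).some.exists_boundary_dart {u, v} (by simp) hz
    apply he₂
    rcases he₁ with he | he
    · exact Or.inr (hu.eq_of_adj (he ▸ e.adj) huv)
    · exact Or.inl (hv.eq_of_adj (he ▸ e.adj) huv.symm)
  calc Fintype.card V = (Finset.univ : Finset V).card := rfl
    _ ≤ ({u, v} : Finset V).card := Finset.card_le_card fun z _ => by simpa using huniv z
    _ ≤ 2 := Finset.card_le_two

lemma exists_adj_not_isLeaf [Fintype V] (hG : G.Connected)
    (hcard : 3 ≤ Fintype.card V) {d : V} (hd : ¬ IsStrongSupport G d) :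
    ∃ p, G.Adj d p ∧ ¬ IsLeaf G p := by
  have : Nontrivial V := Fintype.one_lt_card_iff_nontrivial.mp (by omega)
  obtain ⟨p, hdp⟩ := hG.preconnected.exists_adj_of_nontrivial d
  by_cases hp : IsLeaf G p
  · have hd' : ¬ IsLeaf G d := fun hdl => by
      have := card_le_two_of_adj_of_isLeaf hG hdp hdl hp
      omega
    obtain ⟨w, hdw, hwp⟩ := exists_adj_ne_of_not_isLeaf hdp hd'
    exact ⟨w, hdw, fun hw => hd ⟨p, w, hwp.symm, hdp, hdw, hp, hw⟩⟩
  · exact ⟨p, hdp, hp⟩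

end Leaves

lemma pdNum_le_one [Fintype V] {G : SimpleGraph V} (hG : G.Connected)
    (hcard : Fintype.card V ≤ 2) : pdNum G ≤ 1 := by
  classical
  obtain ⟨v₀⟩ := hG.nonempty
  refine (pdNum_le_card (S := {v₀}) fun v => ?_).trans_eq (Finset.card_singleton v₀)
  by_cases hv : v = v₀
  · exact Observed.mem v (by simp [hv])
  obtain ⟨e, -, he₁, he₂⟩ := (hG.preconnected v₀ v).some.exists_boundary_dart {v₀} rfl hv
  have he : e.snd = v := by
    by_contra h
    exact absurd hcard
      (not_le.mpr (Fintype.two_lt_card_iff.mpr ⟨v₀, e.snd, v, Ne.symm he₂, Ne.symm hv, h⟩))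
  exact Observed.dom v₀ v (by simp) (he₁ ▸ he ▸ e.adj)

section Forts

variable {G : SimpleGraph V} {H : SimpleGraph W}

def IsFort (G : SimpleGraph V) (F : Set V) : Prop :=
  ∀ u ∉ F, ∀ v ∈ F, G.Adj u v → ∃ w ∈ F, w ≠ v ∧ G.Adj u w

def leafNbrs (G : SimpleGraph V) (x : V) : Set V :=
  {ℓ | G.Adj x ℓ ∧ IsLeaf G ℓ}

lemma Observed.exists_dominates_of_isFort {F : Set V} (hF : IsFort G F) {S : Set V} {v : V}
    (hv : Observed G S v) (hvF : v ∈ F) : ∃ s ∈ S, ∃ f ∈ F, Dominates G s f := by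
  induction hv with
  | mem v hvS => exact ⟨v, hvS, v, hvF, Or.inl rfl⟩
  | dom u v huS huv => exact ⟨u, huS, v, hvF, Or.inr huv⟩
  | prop u v _ huv _ ihu ihw =>
    by_cases huF : u ∈ F
    · exact ihu huF
    · obtain ⟨w, hwF, hwv, huw⟩ := hF u huF v hvF huv
      exact ihw w huw hwv hwF

lemma IsPDS.exists_dominates_of_isFort {S : Set V} (hS : IsPDS G S) {F : Set V}
    (hF : IsFort G F) (hne : F.Nonempty) : ∃ s ∈ S, ∃ f ∈ F, Dominates G s f :=
  (hS hne.some).exists_dominates_of_isFort hF hne.some_mem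

lemma IsFort.boxProd {F₁ : Set V} {F₂ : Set W} (h₁ : IsFort G F₁) (h₂ : IsFort H F₂) :
    IsFort (G □ H) (F₁ ×ˢ F₂) := by
  rintro ⟨u₁, u₂⟩ hu ⟨v₁, v₂⟩ ⟨hv₁, hv₂⟩ huv
  simp only [Set.mem_prod, not_and_or] at hu
  rcases huv with ⟨huv₁, rfl : u₂ = v₂⟩ | ⟨huv₂, rfl : u₁ = v₁⟩
  · obtain ⟨w₁, hw₁, hwv, huw⟩ := h₁ u₁ (hu.resolve_right (not_not.mpr hv₂)) v₁ hv₁ huv₁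
    exact ⟨(w₁, u₂), ⟨hw₁, hv₂⟩, fun h => hwv (congrArg Prod.fst h), Or.inl ⟨huw, rfl⟩⟩
  · obtain ⟨w₂, hw₂, hwv, huw⟩ := h₂ u₂ (hu.resolve_left (not_not.mpr hv₁)) v₂ hv₂ huv₂
    exact ⟨(u₁, w₂), ⟨hv₁, hw₂⟩, fun h => hwv (congrArg Prod.snd h), Or.inr ⟨huw, rfl⟩⟩

lemma Dominates.of_boxProd {s f : V × W} (h : Dominates (G □ H) s f) :
    Dominates G s.1 f.1 ∧ Dominates H s.2 f.2 := by
  rcases h with rfl | ⟨h₁, h₂⟩ | ⟨h₂, h₁⟩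
  · exact ⟨Or.inl rfl, Or.inl rfl⟩
  · exact ⟨Or.inr h₁, Or.inl h₂.symm⟩
  · exact ⟨Or.inl h₁.symm, Or.inr h₂⟩

lemma IsStrongSupport.isFort_leafNbrs {x : V} (hx : IsStrongSupport G x) :
    IsFort G (leafNbrs G x) := by
  intro u _ ℓ ⟨hxℓ, hℓ⟩ huℓ
  obtain rfl : u = x := hℓ.eq_of_adj huℓ.symm hxℓ.symm
  obtain ⟨a, b, hab, hua, hub, ha, hb⟩ := hx
  by_cases haℓ : a = ℓ
  · exact ⟨b, ⟨hub, hb⟩, fun h => hab (haℓ.trans h.symm), hub⟩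
  · exact ⟨a, ⟨hua, ha⟩, haℓ, hua⟩

lemma IsStrongSupport.leafNbrs_nonempty {x : V} (hx : IsStrongSupport G x) :
    (leafNbrs G x).Nonempty :=
  let ⟨a, _, _, hxa, _, ha, _⟩ := hx
  ⟨a, hxa, ha⟩

lemma Dominates.mem_insert_leafNbrs {x s ℓ : V} (h : Dominates G s ℓ) (hℓ : ℓ ∈ leafNbrs G x) :
    s ∈ insert x (leafNbrs G x) := by
  rcases h with rfl | hsℓ
  · exact Or.inr hℓ
  · exact Or.inl (hℓ.2.eq_of_adj hsℓ.symm hℓ.1.symm)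

lemma IsStrongSupport.eq_of_mem_insert_leafNbrs {x x' s : V} (hx : IsStrongSupport G x)
    (hx' : IsStrongSupport G x') (hs : s ∈ insert x (leafNbrs G x))
    (hs' : s ∈ insert x' (leafNbrs G x')) : x = x' := by
  rcases hs with rfl | ⟨hxs, hs⟩ <;> rcases hs' with rfl | ⟨hx's, hs'⟩
  · rfl
  · exact absurd hs' hx.not_isLeaf
  · exact absurd hs hx'.not_isLeaf
  · exact hs.eq_of_adj hxs.symm hx's.symm

end Forts

section Product

variable {G : SimpleGraph V} {H : SimpleGraph W}

lemma IsPDS.exists_mem_insert_leafNbrs_boxProd {S : Set (V × W)} (hS : IsPDS (G □ H) S)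
    {x : V} {y : W} (hx : IsStrongSupport G x) (hy : IsStrongSupport H y) :
    ∃ s ∈ S, s.1 ∈ insert x (leafNbrs G x) ∧ s.2 ∈ insert y (leafNbrs H y) := by
  obtain ⟨s, hs, f, ⟨hf₁, hf₂⟩, hsf⟩ :=
    hS.exists_dominates_of_isFort (hx.isFort_leafNbrs.boxProd hy.isFort_leafNbrs)
      (hx.leafNbrs_nonempty.prod hy.leafNbrs_nonempty)
  exact ⟨s, hs, hsf.of_boxProd.1.mem_insert_leafNbrs hf₁, hsf.of_boxProd.2.mem_insert_leafNbrs hf₂⟩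

lemma ssCount_mul_ssCount_le_pdNum_boxProd [Fintype V] [Fintype W] :
    ssCount G * ssCount H ≤ pdNum (G □ H) := by
  classical
  obtain ⟨S, hcard, hS⟩ := exists_isPDS_card_eq_pdNum (G □ H)
  choose! f hfS hf₁ hf₂ using fun p : V × W =>
    fun (hp : IsStrongSupport G p.1 ∧ IsStrongSupport H p.2) =>
      hS.exists_mem_insert_leafNbrs_boxProd hp.1 hp.2
  rw [ssCount_eq_card_filter, ssCount_eq_card_filter, ← Finset.card_product, ← hcard]
  refine Finset.card_le_card_of_injOn f (fun p hp => ?_) (fun p hp q hq hpq => ?_)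
  · simp only [Finset.coe_product, Finset.coe_filter, Finset.mem_univ, true_and, Set.mem_prod,
      Set.mem_ofPred_eq] at hp
    exact hfS p hp
  · simp only [Finset.coe_product, Finset.coe_filter, Finset.mem_univ, true_and, Set.mem_prod,
      Set.mem_ofPred_eq] at hp hq
    refine Prod.ext (hp.1.eq_of_mem_insert_leafNbrs hq.1 (hf₁ p hp) ?_)
      (hp.2.eq_of_mem_insert_leafNbrs hq.2 (hf₂ p hp) ?_)
    · exact hpq ▸ hf₁ q hq
    · exact hpq ▸ hf₂ q hq

end Product

section Map

variable {G : SimpleGraph V} {H : SimpleGraph W} {f : V → W}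

lemma Observed.map (hadj : ∀ u v, G.Adj u v → f u = f v ∨ H.Adj (f u) (f v))
    (hlift : ∀ u w, H.Adj (f u) w → ∃ v, G.Adj u v ∧ f v = w) {S : Set V} {v : V}
    (hv : Observed G S v) : Observed H (f '' S) (f v) := by
  induction hv with
  | mem v hvS => exact Observed.mem _ (Set.mem_image_of_mem f hvS)
  | dom u v huS huv =>
    rcases hadj u v huv with h | h
    · exact h ▸ Observed.mem _ (Set.mem_image_of_mem f huS)
    · exact Observed.dom _ _ (Set.mem_image_of_mem f huS) h
  | prop u v _ huv _ ihu ihw =>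
    rcases hadj u v huv with h | h
    · exact h ▸ ihu
    · refine Observed.prop _ _ ihu h fun w hw hwv => ?_
      obtain ⟨w', huw', rfl⟩ := hlift u w hw
      exact ihw w' huw' (fun h => hwv (congrArg f h))

lemma pdNum_le_pdNum_of_surjective [Fintype V] [Fintype W] (hf : Function.Surjective f)
    (hadj : ∀ u v, G.Adj u v → f u = f v ∨ H.Adj (f u) (f v))
    (hlift : ∀ u w, H.Adj (f u) w → ∃ v, G.Adj u v ∧ f v = w) : pdNum H ≤ pdNum G := by
  classical
  obtain ⟨S, hcard, hS⟩ := exists_isPDS_card_eq_pdNum G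
  have hfS : IsPDS H ↑(S.image f) := fun w => by
    obtain ⟨v, rfl⟩ := hf w
    simpa using (hS v).map hadj hlift
  exact (pdNum_le_card hfS).trans (hcard ▸ Finset.card_image_le)

lemma pdNum_le_pdNum_boxProd_left [Fintype V] [Fintype W] [Nonempty W] :
    pdNum G ≤ pdNum (G □ H) :=
  pdNum_le_pdNum_of_surjective Prod.fst_surjective
    (fun _ _ h => h.elim (fun h => Or.inr h.1) (fun h => Or.inl h.2))
    (fun u w h => ⟨(w, u.2), Or.inl ⟨h, rfl⟩, rfl⟩)

lemma pdNum_le_pdNum_boxProd_right [Fintype V] [Fintype W] [Nonempty V] :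
    pdNum H ≤ pdNum (G □ H) :=
  pdNum_le_pdNum_of_surjective Prod.snd_surjective
    (fun _ _ h => h.elim (fun h => Or.inl h.2) (fun h => Or.inr h.1))
    (fun u w h => ⟨(u.1, w), Or.inr ⟨h, rfl⟩, rfl⟩)

end Map

section Trees

variable {G : SimpleGraph V}

lemma not_adj_of_adj_of_adj (hG : G.IsAcyclic) {a b c : V} (hab : G.Adj a b)
    (hbc : G.Adj b c) : ¬ G.Adj a c := fun hac => by
  have hw : (Walk.cons hab (Walk.cons hbc Walk.nil)).IsPath := by
    simp [Walk.isPath_def, hab.ne, hac.ne, hbc.ne]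
  have := congrArg Subtype.val
    ((isAcyclic_iff_subsingleton_path.mp hG _ _).elim ⟨_, hw⟩ (Path.singleton hac))
  simp only [Path.singleton, Walk.cons.injEq] at this
  exact hbc.ne this.1

lemma eq_of_adj_of_adj (hG : G.IsAcyclic) {a b b' c : V} (hac : a ≠ c)
    (hab : G.Adj a b) (hbc : G.Adj b c) (hab' : G.Adj a b') (hb'c : G.Adj b' c) : b = b' := by
  have hw : (Walk.cons hab (Walk.cons hbc Walk.nil)).IsPath := by
    simp [Walk.isPath_def, hab.ne, hac, hbc.ne]
  have hw' : (Walk.cons hab' (Walk.cons hb'c Walk.nil)).IsPath := by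
    simp [Walk.isPath_def, hab'.ne, hac, hb'c.ne]
  have := congrArg Subtype.val
    ((isAcyclic_iff_subsingleton_path.mp hG _ _).elim ⟨_, hw⟩ ⟨_, hw'⟩)
  simp only [Walk.cons.injEq] at this
  exact this.1

lemma eq_of_adj_of_dominates (hG : G.IsAcyclic) {q d w₁ w₂ : V} (hqd : q ≠ d)
    (h₁ : G.Adj q w₁) (h₂ : G.Adj q w₂) (hd₁ : Dominates G d w₁) (hd₂ : Dominates G d w₂) :
    w₁ = w₂ := by
  rcases hd₁ with rfl | hd₁ <;> rcases hd₂ with rfl | hd₂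
  · rfl
  · exact absurd h₂ (not_adj_of_adj_of_adj hG h₁ hd₂)
  · exact absurd h₁ (not_adj_of_adj_of_adj hG h₂ hd₁)
  · exact eq_of_adj_of_adj hG hqd h₁ hd₁.symm h₂ hd₂.symm

lemma isPDS_erase [Fintype V] [DecidableEq V] (hT : G.IsTree)
    (hcard : 3 ≤ Fintype.card V) {D : Finset V} (hD : IsDominating G D) {d : V}
    (hd : ¬ IsStrongSupport G d) : IsPDS G ↑(D.erase d) := by
  have hfar : ∀ v, ¬ Dominates G d v → Observed G ↑(D.erase d) v := fun v hv => by
    obtain ⟨u, hu, huv⟩ := hD v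
    have hud : u ≠ d := by rintro rfl; exact hv huv
    exact Observed.of_dominates (by simp [hu, hud]) huv
  have hfar_of_adj : ∀ {p q}, G.Adj d p → G.Adj p q → q ≠ d → ¬ Dominates G d q :=
    fun hdp hpq hqd hq =>
      hqd (eq_of_adj_of_dominates hT.isAcyclic hdp.ne' hpq hdp.symm hq (Or.inl rfl))
  -- `q` lies outside `N[d]` and `p` is its only neighbour in `N[d]`, so `q` forces `p`
  have hinner : ∀ {p}, G.Adj d p → ¬ IsLeaf G p → Observed G ↑(D.erase d) p := fun hdp hp => by
    obtain ⟨q, hpq, hqd⟩ := exists_adj_ne_of_not_isLeaf hdp.symm hp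
    refine Observed.prop q _ (hfar q (hfar_of_adj hdp hpq hqd)) hpq.symm fun w hqw hwp => ?_
    exact hfar w fun hw =>
      hwp (eq_of_adj_of_dominates hT.isAcyclic hqd hqw hpq.symm hw (Or.inr hdp))
  have hcenter : Observed G ↑(D.erase d) d := by
    obtain ⟨p, hdp, hp⟩ := exists_adj_not_isLeaf hT.connected hcard hd
    exact Observed.prop p d (hinner hdp hp) hdp.symm fun w hpw hwd =>
      hfar w (hfar_of_adj hdp hpw hwd)
  intro v
  by_cases hv : Dominates G d v
  · rcases hv with rfl | hdv
    · exact hcenter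
    by_cases hvl : IsLeaf G v
    · exact Observed.prop d v hcenter hdv fun w hdw hwv =>
        hinner hdw fun hwl => hd ⟨v, w, hwv.symm, hdv, hdw, hvl, hwl⟩
    · exact hinner hdv hvl
  · exact hfar v hv

lemma domNum_le_ssCount [Fintype V] (hT : G.IsTree) (hcard : 3 ≤ Fintype.card V)
    (he : pdNum G = domNum G) : domNum G ≤ ssCount G := by
  classical
  by_cases hss : IsDominating G (Finset.univ.filter (IsStrongSupport G))
  · exact (domNum_le_card hss).trans_eq (ssCount_eq_card_filter (G := G)).symm
  · obtain ⟨v, hv⟩ : ∃ v, ∀ u, IsStrongSupport G u → ¬ Dominates G u v := by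
      simpa [IsDominating] using hss
    obtain ⟨D, hcard_D, hD⟩ := exists_isDominating_card_eq_domNum G
    obtain ⟨d, hdD, hdv⟩ := hD v
    have := pdNum_le_card (isPDS_erase hT hcard hD fun hd => hv d hd hdv)
    have := Finset.card_erase_lt_of_mem hdD
    omega

end Trees

theorem stmt8 {V W : Type} [Fintype V] [Fintype W]
    (T₁ : SimpleGraph V) (T₂ : SimpleGraph W)
    (h₁ : T₁.IsTree) (h₂ : T₂.IsTree)
    (he₁ : pdNum T₁ = domNum T₁) (he₂ : pdNum T₂ = domNum T₂) :
    pdNum T₁ * pdNum T₂ ≤ pdNum (T₁.boxProd T₂) := by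
  have := h₁.connected.nonempty
  have := h₂.connected.nonempty
  by_cases hV : Fintype.card V ≤ 2
  · calc pdNum T₁ * pdNum T₂ ≤ 1 * pdNum T₂ :=
          Nat.mul_le_mul_right _ (pdNum_le_one h₁.connected hV)
      _ ≤ pdNum (T₁ □ T₂) := (one_mul _).trans_le pdNum_le_pdNum_boxProd_right
  by_cases hW : Fintype.card W ≤ 2
  · calc pdNum T₁ * pdNum T₂ ≤ pdNum T₁ * 1 :=
          Nat.mul_le_mul_left _ (pdNum_le_one h₂.connected hW)
      _ ≤ pdNum (T₁ □ T₂) := (mul_one _).trans_le pdNum_le_pdNum_boxProd_left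
  calc pdNum T₁ * pdNum T₂ = domNum T₁ * domNum T₂ := by rw [he₁, he₂]
    _ ≤ ssCount T₁ * ssCount T₂ :=
        Nat.mul_le_mul (domNum_le_ssCount h₁ (by omega) he₁) (domNum_le_ssCount h₂ (by omega) he₂)
    _ ≤ pdNum (T₁ □ T₂) := ssCount_mul_ssCount_le_pdNum_boxProd

end PaperPD
end

section
/- For any graph G and any pair of leaves ℓ₁, ℓ₂ adjacent to a common strong support vertex x, every power dominating set D of G satisfies D ∩ {x, ℓ₁, ℓ₂} ≠ ∅. -/
namespace PaperPD

open SimpleGraph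

variable {V : Type} {W : Type}

/-! A leaf `ℓ` at `x` can only become observed from `x`: either `x ∈ D`, or `x` forces `ℓ`, which
requires every other neighbour of `x` to be observed already. With two leaves at `x` each one would
have to be observed before the other, so if `D` avoids `x, ℓ₁, ℓ₂` neither is ever observed. -/

theorem IsLeaf.eq_of_adj_s17 {G : SimpleGraph V} {ℓ u x : V} (hl : IsLeaf G ℓ) (hx : G.Adj x ℓ)
    (hu : G.Adj u ℓ) : u = x :=
  hl.unique hu.symm hx.symm

theorem Observed.ne_of_twin_leaves {G : SimpleGraph V} {S : Set V} {x ℓ₁ ℓ₂ : V}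
    (hne : ℓ₁ ≠ ℓ₂) (h₁ : G.Adj x ℓ₁) (h₂ : G.Adj x ℓ₂) (hl₁ : IsLeaf G ℓ₁) (hl₂ : IsLeaf G ℓ₂)
    (hx : x ∉ S) (hℓ₁ : ℓ₁ ∉ S) (hℓ₂ : ℓ₂ ∉ S) {v : V} (hv : Observed G S v) :
    v ≠ ℓ₁ ∧ v ≠ ℓ₂ := by
  induction hv with
  | mem v hv => exact ⟨fun h => hℓ₁ (h ▸ hv), fun h => hℓ₂ (h ▸ hv)⟩
  | dom u v hu huv =>
    constructor <;> rintro rfl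
    · exact hx (hl₁.eq_of_adj_s17 h₁ huv ▸ hu)
    · exact hx (hl₂.eq_of_adj_s17 h₂ huv ▸ hu)
  | prop u v _ huv _ _ ih =>
    constructor <;> rintro rfl
    · exact (ih ℓ₂ (hl₁.eq_of_adj_s17 h₁ huv ▸ h₂) hne.symm).2 rfl
    · exact (ih ℓ₁ (hl₂.eq_of_adj_s17 h₂ huv ▸ h₁) hne).1 rfl

theorem stmt17 {V : Type} (G : SimpleGraph V) (x ℓ₁ ℓ₂ : V)
    (hne : ℓ₁ ≠ ℓ₂) (h₁ : G.Adj x ℓ₁) (h₂ : G.Adj x ℓ₂)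
    (hl₁ : IsLeaf G ℓ₁) (hl₂ : IsLeaf G ℓ₂)
    (D : Set V) (hD : IsPDS G D) :
    (D ∩ {x, ℓ₁, ℓ₂}).Nonempty := by
  by_contra hempty
  have hmiss : ∀ v ∈ ({x, ℓ₁, ℓ₂} : Set V), v ∉ D := fun v hv hvD => hempty ⟨v, hvD, hv⟩
  exact (Observed.ne_of_twin_leaves hne h₁ h₂ hl₁ hl₂ (hmiss x (by simp)) (hmiss ℓ₁ (by simp))
    (hmiss ℓ₂ (by simp)) (hD ℓ₁)).1 rfl

end PaperPD
end
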